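/- (Example 3.2: a non-normal rational scroll whose higher osculating spaces all have dimension 3 along a fibre.) Fix integers k ≥ 2 and r ≥ 3. Let n = 2, r_1 = 1, r_2 = r, and take a^1(t) = (1, t) and a^2(t) = (1, t, t^{k+1}, t^{k+2}, …, t^{k+r-1}). Then: (1) for every integer h with 2 ≤ h ≤ k, rank M^2_h(0) = 2 (the point of C_2 at t = 0 lies in Φ_h(C_2) with osculating space of every order h ≤ k equal to the tangent line); and (2) for every h with 2 ≤ h ≤ k, every s ∈ {1,2} and every u ∈ ℂ, rank M^{X,s}_h(0, u) = 4, i.e. every point of the fibre of the scroll over t = 0 has h-th osculating space of projective dimension exactly 3 for all 2 ≤ h ≤ k. -/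

import Mathlib

/-!
At `t = 0` each coordinate `t ^ e j` of a monomial curve has exactly one nonzero derivative, of
order `e j`, so when the exponents are distinct the rows of the `k`-th jet matrix are multiples of
standard basis vectors and its row space is spanned by the coordinates with `e j ≤ k`. In the
example the exponents are `0, 1, k + 1, k + 2, …`, so for `h ≤ k` both curves only see their
tangent line. For the scroll, no exponent of the curves other than the `s`-th equals `h`, so the
`u`-terms of the first `h + 1` rows already lie in the span of the remaining rows, and the jet of
the scroll spans the direct sum of the two tangent lines: rank `2 + 2 = 4`.
-/

open Matrix

/-- The `k`-th jet matrix `M^i_k(t)` of a parametrized curve. -/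
noncomputable def curveJet (r : ℕ) (a : ℂ → Fin (r + 1) → ℂ) (k : ℕ) (t : ℂ) :
    Matrix (Fin (k + 1)) (Fin (r + 1)) ℂ :=
  Matrix.of fun l j => iteratedDeriv (l : ℕ) (fun s => a s j) t

/-- The `i`-th block inclusion `ι_i : ℂ^{r_i+1} → V`. -/
noncomputable def blockIncl {n : ℕ} (r : Fin n → ℕ) (i : Fin n)
    (v : Fin (r i + 1) → ℂ) : (Σ j : Fin n, Fin (r j + 1)) → ℂ :=
  fun p => if h : p.1 = i then v (Fin.cast (by rw [h]) p.2) else 0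

/-- The `k`-th jet matrix `M^{X,s}_k(t,u)` of the decomposable scroll. -/
noncomputable def scrollJet {n : ℕ} (r : Fin n → ℕ)
    (a : ∀ i : Fin n, ℂ → Fin (r i + 1) → ℂ) (k : ℕ) (s : Fin n) (t : ℂ)
    (u : Fin n → ℂ) :
    Matrix (Fin (k + 1) ⊕ ({i : Fin n // i ≠ s} × Fin k))
      (Σ j : Fin n, Fin (r j + 1)) ℂ :=
  Matrix.of fun row =>
    match row with
    | Sum.inl l =>
        blockIncl r s (curveJet (r s) (a s) k t l) +
          ∑ i ∈ Finset.univ.filter (fun i => i ≠ s),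
            u i • blockIncl r i (curveJet (r i) (a i) k t l)
    | Sum.inr q =>
        blockIncl r q.1.1 (curveJet (r q.1.1) (a q.1.1) k t q.2.castSucc)

/-- The row space of a matrix, i.e. the span of its rows. -/
noncomputable def rowSpace {m α : Type*} [Fintype m] (M : Matrix m α ℂ) : Submodule ℂ (α → ℂ) :=
  Submodule.span ℂ (Set.range fun i => M i)

theorem Matrix.rank_eq_finrank_rowSpace {m α : Type*} [Fintype m] [Fintype α]
    (M : Matrix m α ℂ) : M.rank = Module.finrank ℂ (rowSpace M) :=
  M.rank_eq_finrank_span_row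

open Function Submodule

theorem finrank_span_single_comp {K α ι : Type*} [Field K] [Fintype α] [Fintype ι] [DecidableEq α]
    {f : ι → α} (hf : Injective f) :
    Module.finrank K (span K (Set.range fun x => (Pi.single (f x) 1 : α → K))) =
      Fintype.card ι := by
  refine finrank_span_eq_card ?_
  simpa [Function.comp_def] using (Pi.basisFun K α).linearIndependent.comp f hf

section BlockInclusion

variable {n : ℕ} (r : Fin n → ℕ) (i : Fin n)

noncomputable def blockInclₗ : (Fin (r i + 1) → ℂ) →ₗ[ℂ] (Σ j : Fin n, Fin (r j + 1)) → ℂ where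
  toFun := blockIncl r i
  map_add' v w := by
    funext p
    by_cases hp : p.1 = i <;> simp [blockIncl, hp]
  map_smul' c v := by
    funext p
    by_cases hp : p.1 = i <;> simp [blockIncl, hp]

@[simp]
theorem blockInclₗ_apply (v : Fin (r i + 1) → ℂ) : blockInclₗ r i v = blockIncl r i v := rfl

theorem blockIncl_single (j : Fin (r i + 1)) :
    blockIncl r i (Pi.single j 1) = Pi.single (⟨i, j⟩ : Σ j : Fin n, Fin (r j + 1)) 1 := by
  funext ⟨p, q⟩
  by_cases hp : p = i
  · subst hp
    simp [blockIncl, Pi.single_apply, Sigma.ext_iff, Fin.ext_iff]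
  · simp [blockIncl, hp, Sigma.ext_iff]

end BlockInclusion

section MonomialCurve

variable {r : ℕ} {a : ℂ → Fin (r + 1) → ℂ} {e : Fin (r + 1) → ℕ}

theorem curveJet_zero_apply_of_monomial (ha : ∀ t j, a t j = t ^ e j) (k : ℕ)
    (l : Fin (k + 1)) (j : Fin (r + 1)) :
    curveJet r a k 0 l j = if (l : ℕ) = e j then ((e j).factorial : ℂ) else 0 := by
  simp only [curveJet, of_apply, ha]
  rw [iteratedDeriv_fun_pow_zero, Nat.cast_ite, Nat.cast_zero]

theorem curveJet_zero_of_monomial_of_eq (ha : ∀ t j, a t j = t ^ e j) (he : Injective e)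
    {k : ℕ} {l : Fin (k + 1)} {j : Fin (r + 1)} (hj : e j = l) :
    curveJet r a k 0 l = ((e j).factorial : ℂ) • Pi.single j 1 := by
  funext j'
  rw [curveJet_zero_apply_of_monomial ha, ← hj]
  by_cases hj' : j' = j
  · simp [hj']
  · simp [hj', Ne.symm (he.ne hj')]

theorem curveJet_zero_of_monomial_of_ne (ha : ∀ t j, a t j = t ^ e j) {k : ℕ}
    {l : Fin (k + 1)} (hl : ∀ j, e j ≠ l) : curveJet r a k 0 l = 0 := by
  funext j
  simp [curveJet_zero_apply_of_monomial ha, Ne.symm (hl j)]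

theorem single_eq_inv_factorial_smul_curveJet_zero (ha : ∀ t j, a t j = t ^ e j)
    (he : Injective e) {k : ℕ} {j : Fin (r + 1)} (hj : e j ≤ k) :
    Pi.single j 1 = ((e j).factorial : ℂ)⁻¹ • curveJet r a k 0 ⟨e j, by omega⟩ := by
  rw [curveJet_zero_of_monomial_of_eq ha he rfl,
    inv_smul_smul₀ (Nat.cast_ne_zero.2 (Nat.factorial_ne_zero _))]

theorem rowSpace_curveJet_zero_of_monomial (ha : ∀ t j, a t j = t ^ e j) (he : Injective e)
    (k : ℕ) :
    rowSpace (curveJet r a k 0) =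
      span ℂ (Set.range fun j : {j // e j ≤ k} => (Pi.single j.1 1 : Fin (r + 1) → ℂ)) := by
  apply le_antisymm
  · refine span_le.2 ?_
    rintro _ ⟨l, rfl⟩
    beta_reduce
    by_cases hl : ∃ j, e j = l
    · obtain ⟨j, hj⟩ := hl
      rw [curveJet_zero_of_monomial_of_eq ha he hj]
      exact smul_mem _ _ (subset_span ⟨⟨j, hj ▸ l.is_le⟩, rfl⟩)
    · rw [curveJet_zero_of_monomial_of_ne ha (not_exists.1 hl)]
      exact zero_mem _
  · refine span_le.2 ?_
    rintro _ ⟨⟨j, hj⟩, rfl⟩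
    beta_reduce
    rw [single_eq_inv_factorial_smul_curveJet_zero ha he hj]
    exact smul_mem _ _ (subset_span ⟨_, rfl⟩)

theorem rank_curveJet_zero_of_monomial (ha : ∀ t j, a t j = t ^ e j) (he : Injective e)
    (k : ℕ) : (curveJet r a k 0).rank = Fintype.card {j // e j ≤ k} := by
  rw [Matrix.rank_eq_finrank_rowSpace, rowSpace_curveJet_zero_of_monomial ha he,
    finrank_span_single_comp Subtype.val_injective]

end MonomialCurve

section Scroll

variable {n : ℕ} {r : Fin n → ℕ} {a : ∀ i : Fin n, ℂ → Fin (r i + 1) → ℂ} {k : ℕ} {s : Fin n}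
  {t : ℂ} {u : Fin n → ℂ}

theorem blockIncl_mem_span_single {P : ∀ i, Fin (r i + 1) → Prop} {i : Fin n}
    {v : Fin (r i + 1) → ℂ}
    (hv : v ∈ span ℂ (Set.range fun j : {j // P i j} => (Pi.single j.1 1 : Fin (r i + 1) → ℂ))) :
    blockIncl r i v ∈ span ℂ (Set.range fun p : Σ i, {j // P i j} =>
      (Pi.single ⟨p.1, p.2.1⟩ 1 : (Σ i : Fin n, Fin (r i + 1)) → ℂ)) := by
  have hmap := mem_map_of_mem (f := blockInclₗ r i) hv
  rw [map_span, ← Set.range_comp] at hmap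
  refine span_mono ?_ hmap
  rintro _ ⟨j, rfl⟩
  exact ⟨⟨i, j⟩, (blockIncl_single r i j).symm⟩

theorem scrollJet_inl (l : Fin (k + 1)) :
    scrollJet r a k s t u (Sum.inl l) =
      blockIncl r s (curveJet (r s) (a s) k t l) +
        ∑ i ∈ Finset.univ.filter (· ≠ s), u i • blockIncl r i (curveJet (r i) (a i) k t l) :=
  rfl

theorem blockIncl_curveJet_mem_rowSpace_scrollJet_of_ne {i : Fin n} (hi : i ≠ s) (m : Fin k) :
    blockIncl r i (curveJet (r i) (a i) k t m.castSucc) ∈ rowSpace (scrollJet r a k s t u) :=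
  subset_span ⟨Sum.inr (⟨i, hi⟩, m), rfl⟩

theorem blockIncl_curveJet_mem_rowSpace_scrollJet_self (l : Fin (k + 1))
    (h : ∀ i ≠ s, blockIncl r i (curveJet (r i) (a i) k t l) ∈ rowSpace (scrollJet r a k s t u)) :
    blockIncl r s (curveJet (r s) (a s) k t l) ∈ rowSpace (scrollJet r a k s t u) := by
  have hrow : scrollJet r a k s t u (Sum.inl l) ∈ rowSpace (scrollJet r a k s t u) :=
    subset_span ⟨_, rfl⟩
  have hsum : ∑ i ∈ Finset.univ.filter (· ≠ s), u i • blockIncl r i (curveJet (r i) (a i) k t l)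
      ∈ rowSpace (scrollJet r a k s t u) :=
    sum_mem fun i hi => smul_mem _ _ (h i (Finset.mem_filter.1 hi).2)
  simpa [scrollJet_inl] using sub_mem hrow hsum

end Scroll

section MonomialScroll

variable {n : ℕ} {r : Fin n → ℕ} {a : ∀ i : Fin n, ℂ → Fin (r i + 1) → ℂ}
  {e : ∀ i, Fin (r i + 1) → ℕ} {k : ℕ} {s : Fin n}

theorem rowSpace_scrollJet_zero_of_monomial (ha : ∀ i t j, a i t j = t ^ e i j)
    (he : ∀ i, Injective (e i)) (hflex : ∀ i ≠ s, ∀ j, e i j ≠ k) (u : Fin n → ℂ) :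
    rowSpace (scrollJet r a k s 0 u) = span ℂ (Set.range fun p : Σ i, {j // e i j ≤ k} =>
      (Pi.single ⟨p.1, p.2.1⟩ 1 : (Σ i : Fin n, Fin (r i + 1)) → ℂ)) := by
  have hcurve (i : Fin n) (l : Fin (k + 1)) :
      blockIncl r i (curveJet (r i) (a i) k 0 l) ∈
        span ℂ (Set.range fun p : Σ i, {j // e i j ≤ k} =>
          (Pi.single ⟨p.1, p.2.1⟩ 1 : (Σ i : Fin n, Fin (r i + 1)) → ℂ)) :=
    blockIncl_mem_span_single <| by
      rw [← rowSpace_curveJet_zero_of_monomial (ha i) (he i) k]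
      exact subset_span ⟨l, rfl⟩
  have hne (i : Fin n) (hi : i ≠ s) (l : Fin (k + 1)) :
      blockIncl r i (curveJet (r i) (a i) k 0 l) ∈ rowSpace (scrollJet r a k s 0 u) := by
    rcases l.is_le.lt_or_eq with hl | hl
    · exact blockIncl_curveJet_mem_rowSpace_scrollJet_of_ne hi ⟨l, hl⟩
    · rw [curveJet_zero_of_monomial_of_ne (ha i) fun j hj => hflex i hi j (hj.trans hl),
        ← blockInclₗ_apply, map_zero]
      exact zero_mem _
  apply le_antisymm
  · refine span_le.2 ?_
    rintro _ ⟨l | ⟨⟨i, hi⟩, m⟩, rfl⟩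
    · beta_reduce
      rw [SetLike.mem_coe, scrollJet_inl]
      exact add_mem (hcurve s l) (sum_mem fun i _ => smul_mem _ _ (hcurve i l))
    · exact hcurve i m.castSucc
  · refine span_le.2 ?_
    rintro _ ⟨⟨i, j, hj⟩, rfl⟩
    have hrow (l : Fin (k + 1)) :
        blockIncl r i (curveJet (r i) (a i) k 0 l) ∈ rowSpace (scrollJet r a k s 0 u) := by
      obtain rfl | hi := eq_or_ne i s
      · exact blockIncl_curveJet_mem_rowSpace_scrollJet_self l fun i' hi' => hne i' hi' l
      · exact hne i hi l
    beta_reduce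
    rw [← blockIncl_single, single_eq_inv_factorial_smul_curveJet_zero (ha i) (he i) hj,
      ← blockInclₗ_apply, map_smul]
    exact smul_mem _ _ (hrow _)

theorem rank_scrollJet_zero_of_monomial (ha : ∀ i t j, a i t j = t ^ e i j)
    (he : ∀ i, Injective (e i)) (hflex : ∀ i ≠ s, ∀ j, e i j ≠ k) (u : Fin n → ℂ) :
    (scrollJet r a k s 0 u).rank = ∑ i, Fintype.card {j // e i j ≤ k} := by
  rw [Matrix.rank_eq_finrank_rowSpace, rowSpace_scrollJet_zero_of_monomial ha he hflex,
    ← Fintype.card_sigma]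
  refine finrank_span_single_comp ?_
  rintro ⟨i, j⟩ ⟨i', j'⟩ h
  obtain ⟨rfl, h⟩ := Sigma.mk.inj_iff.1 h
  exact congrArg _ (Subtype.ext (eq_of_heq h))

end MonomialScroll

/-- The exponents of `(1, t, t^{k+1}, t^{k+2}, …)`. -/
def gapExponent (k j : ℕ) : ℕ := if j ≤ 1 then j else k + j - 1

theorem gapExponent_injective {k : ℕ} (hk : 1 ≤ k) : Injective (gapExponent k) := by
  intro j j' h
  unfold gapExponent at h
  split_ifs at h <;> omega

theorem gapExponent_ne {k h : ℕ} (h2 : 2 ≤ h) (hk : h ≤ k) (j : ℕ) : gapExponent k j ≠ h := by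
  unfold gapExponent
  split_ifs <;> omega

theorem card_gapExponent_le {k h m : ℕ} (hm : 1 ≤ m) (h1 : 1 ≤ h) (hk : h ≤ k) :
    Fintype.card {j : Fin (m + 1) // gapExponent k j ≤ h} = 2 := by
  rw [Fintype.card_subtype, Finset.card_eq_two]
  refine ⟨⟨0, by omega⟩, ⟨1, by omega⟩, by simp, ?_⟩
  ext j
  rw [Finset.mem_filter_univ, Finset.mem_insert, Finset.mem_singleton, gapExponent]
  simp only [Fin.ext_iff]
  split_ifs <;> omega

theorem statement17_general (k rr : ℕ) (hrr : 3 ≤ rr)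
    (r : Fin 2 → ℕ) (hr0 : r 0 = 1) (hr1 : r 1 = rr)
    (a : ∀ i : Fin 2, ℂ → Fin (r i + 1) → ℂ)
    (ha0 : ∀ (t : ℂ) (j : Fin (r 0 + 1)), a 0 t j = t ^ (j : ℕ))
    (ha1 : ∀ (t : ℂ) (j : Fin (r 1 + 1)),
      a 1 t j = if (j : ℕ) ≤ 1 then t ^ (j : ℕ) else t ^ (k + (j : ℕ) - 1)) :
    (∀ h, 2 ≤ h → h ≤ k → (curveJet (r 1) (a 1) h 0).rank = 2) ∧
    (∀ h, 2 ≤ h → h ≤ k → ∀ (s : Fin 2) (u : Fin 2 → ℂ),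
      (scrollJet r a h s 0 u).rank = 4) := by
  have hr : ∀ i, 1 ≤ r i := Fin.forall_fin_two.2 ⟨hr0.ge, by omega⟩
  have ha : ∀ i t (j : Fin (r i + 1)), a i t j = t ^ gapExponent k j := by
    refine Fin.forall_fin_two.2 ⟨fun t j => ?_, fun t j => ?_⟩
    · have hj : (j : ℕ) ≤ 1 := by have := j.is_lt; omega
      rw [ha0, gapExponent, if_pos hj]
    · rw [ha1, gapExponent]
      split_ifs <;> rfl
  have he (hk : 1 ≤ k) (i : Fin 2) : Injective fun j : Fin (r i + 1) => gapExponent k j :=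
    (gapExponent_injective hk).comp Fin.val_injective
  refine ⟨fun h h2 hk => ?_, fun h h2 hk s u => ?_⟩
  · rw [rank_curveJet_zero_of_monomial (ha 1) (he (by omega) 1),
      card_gapExponent_le (hr 1) (by omega) hk]
  · rw [rank_scrollJet_zero_of_monomial ha (he (by omega)) fun _ _ j => gapExponent_ne h2 hk j,
      Fin.sum_univ_two, card_gapExponent_le (hr 0) (by omega) hk,
      card_gapExponent_le (hr 1) (by omega) hk]

/-- Example 3.2: a non-normal rational scroll whose higher
osculating spaces all have projective dimension 3 along the fibre over `t = 0`:
take `C_1` a line (`a^1(t) = (1, t)`) and `C_2` the projection of a rational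
normal curve given by `a^2(t) = (1, t, t^{k+1}, …, t^{k+r-1})`.  Then for every
`2 ≤ h ≤ k`: (1) the `t = 0` point of `C_2` lies in `Φ_h(C_2)` with
`rank M^2_h(0) = 2`; and (2) every point of the fibre over `t = 0` has `h`-th jet
matrix of rank exactly `4`. -/
theorem statement17 (k rr : ℕ) (hk : 2 ≤ k) (hrr : 3 ≤ rr)
    (r : Fin 2 → ℕ) (hr0 : r 0 = 1) (hr1 : r 1 = rr)
    (a : ∀ i : Fin 2, ℂ → Fin (r i + 1) → ℂ)
    (ha0 : ∀ (t : ℂ) (j : Fin (r 0 + 1)), a 0 t j = t ^ (j : ℕ))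
    (ha1 : ∀ (t : ℂ) (j : Fin (r 1 + 1)),
      a 1 t j = if (j : ℕ) ≤ 1 then t ^ (j : ℕ) else t ^ (k + (j : ℕ) - 1)) :
    (∀ h, 2 ≤ h → h ≤ k → (curveJet (r 1) (a 1) h 0).rank = 2) ∧
    (∀ h, 2 ≤ h → h ≤ k → ∀ (s : Fin 2) (u : Fin 2 → ℂ),
      (scrollJet r a h s 0 u).rank = 4) :=
  statement17_general k rr hrr r hr0 hr1 a ha0 ha1
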